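/- In any additively idempotent semiring satisfying the identities x²y = xy and x²y² = x² + y² for all x, y, the identity xyz = yxz holds for all x, y, z. -/

import Mathlib

/-! Since `+` is commutative, `x²y² = x² + y²` makes squares commute; since `x²y = xy`, a square
can be inserted in front of any product and removed again, so
`xyz = x²y²z = y²x²z = yxz`. -/

theorem mul_self_mul_mul_self_comm_of_add_comm {S : Type*} [Add S] [Mul S]
    (add_comm : ∀ x y : S, x + y = y + x)
    (h2 : ∀ x y : S, x * x * (y * y) = x * x + y * y) (x y : S) :
    x * x * (y * y) = y * y * (x * x) := by
  rw [h2, add_comm, h2]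

theorem mul_mul_comm_of_mul_self_mul {S : Type*} [Mul S]
    (mul_assoc : ∀ x y z : S, x * y * z = x * (y * z))
    (h1 : ∀ x y : S, x * x * y = x * y)
    (sq_comm : ∀ x y : S, x * x * (y * y) = y * y * (x * x)) (x y z : S) :
    x * y * z = y * x * z :=
  calc x * y * z = x * x * (y * y * z) := by rw [h1, h1, mul_assoc]
    _ = y * y * (x * x * z) := by rw [← mul_assoc, sq_comm, mul_assoc]
    _ = y * x * z := by rw [h1, h1, mul_assoc]

theorem stmt_2_general {S : Type*} [Add S] [Mul S]
    (add_comm : ∀ x y : S, x + y = y + x)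
    (mul_assoc : ∀ x y z : S, x * y * z = x * (y * z))
    (h1 : ∀ x y : S, x * x * y = x * y)
    (h2 : ∀ x y : S, x * x * (y * y) = x * x + y * y) :
    ∀ x y z : S, x * y * z = y * x * z :=
  mul_mul_comm_of_mul_self_mul mul_assoc h1
    (mul_self_mul_mul_self_comm_of_add_comm add_comm h2)

theorem stmt_2 {S : Type*} [Add S] [Mul S]
    (add_comm : ∀ x y : S, x + y = y + x)
    (add_assoc : ∀ x y z : S, x + y + z = x + (y + z))
    (add_idem : ∀ x : S, x + x = x)
    (mul_assoc : ∀ x y z : S, x * y * z = x * (y * z))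
    (left_distrib : ∀ x y z : S, x * (y + z) = x * y + x * z)
    (right_distrib : ∀ x y z : S, (x + y) * z = x * z + y * z)
    (h1 : ∀ x y : S, x * x * y = x * y)
    (h2 : ∀ x y : S, x * x * (y * y) = x * x + y * y) :
    ∀ x y z : S, x * y * z = y * x * z :=
  stmt_2_general add_comm mul_assoc h1 h2
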